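/- The inclusions = ⊆ =_□ ⊆ =_◇ hold among the absolute equality, the box equality, and the diamond equality on π-processes, and both inclusions are strict. -/

import Mathlib

set_option linter.unusedVariables false

/-! Core formalization of the π-calculus with name dichotomy.
Names are natural numbers; name variables are natural numbers (kept disjoint
via the sum-like type `NV`). -/

abbrev Name := ℕ

/-- Names and name variables. -/
inductive NV : Type
  | nm : Name → NV
  | vr : ℕ → NV
  deriving DecidableEq

/-- π-terms.  Input and output choices have a finite index set `Fin k`. -/
inductive Term : Type
  | nil : Term
  | inp : NV → ℕ → (k : ℕ) → (Fin k → Term) → Term          -- Σ_{i∈I} n(x).T_i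
  | out : NV → (k : ℕ) → (Fin k → NV) → (Fin k → Term) → Term -- Σ_{i∈I} n̄ m_i.T_i
  | par : Term → Term → Term
  | res : Name → Term → Term
  | mat : NV → NV → Term → Term
  | mis : NV → NV → Term → Term
  | repInp : NV → ℕ → Term → Term                             -- !n(x).T
  | repOut : NV → NV → Term → Term                            -- !n̄m.T

namespace NV

/-- Apply a map on variables. -/
def sub (σ : ℕ → NV) : NV → NV
  | nm a => nm a
  | vr x => σ x

/-- Apply a map on names. -/
def ren (α : Name → Name) : NV → NV
  | nm a => nm (α a)
  | vr x => vr x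

def vars : NV → Set ℕ
  | nm _ => ∅
  | vr x => {x}

def names : NV → Set Name
  | nm a => {a}
  | vr _ => ∅

end NV

namespace Term

/-- Apply a substitution (a map from name variables to names-or-variables),
    not substituting bound occurrences. -/
def applyVar (σ : ℕ → NV) : Term → Term
  | nil => nil
  | inp n x k Ts => inp (n.sub σ) x k (fun i => (Ts i).applyVar (Function.update σ x (NV.vr x)))
  | out n k ms Ts => out (n.sub σ) k (fun i => (ms i).sub σ) (fun i => (Ts i).applyVar σ)
  | par S T => par (S.applyVar σ) (T.applyVar σ)
  | res c T => res c (T.applyVar σ)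
  | mat p q T => mat (p.sub σ) (q.sub σ) (T.applyVar σ)
  | mis p q T => mis (p.sub σ) (q.sub σ) (T.applyVar σ)
  | repInp n x T => repInp (n.sub σ) x (T.applyVar (Function.update σ x (NV.vr x)))
  | repOut n m T => repOut (n.sub σ) (m.sub σ) (T.applyVar σ)

/-- Substitute the single name `c` for the name variable `x`: `T{c/x}`. -/
def subst1 (x : ℕ) (c : Name) (T : Term) : Term :=
  T.applyVar (fun y => if y = x then NV.nm c else NV.vr y)

/-- Apply an assignment (a total map from name variables to names). -/
def assign (ρ : ℕ → Name) (T : Term) : Term :=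
  T.applyVar (fun x => NV.nm (ρ x))

/-- Apply a renaming to all names of a term. -/
def applyName (α : Name → Name) : Term → Term
  | nil => nil
  | inp n x k Ts => inp (n.ren α) x k (fun i => (Ts i).applyName α)
  | out n k ms Ts => out (n.ren α) k (fun i => (ms i).ren α) (fun i => (Ts i).applyName α)
  | par S T => par (S.applyName α) (T.applyName α)
  | res c T => res (α c) (T.applyName α)
  | mat p q T => mat (p.ren α) (q.ren α) (T.applyName α)
  | mis p q T => mis (p.ren α) (q.ren α) (T.applyName α)
  | repInp n x T => repInp (n.ren α) x (T.applyName α)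
  | repOut n m T => repOut (n.ren α) (m.ren α) (T.applyName α)

/-- Free name variables. -/
def fvar : Term → Set ℕ
  | nil => ∅
  | inp n x k Ts => n.vars ∪ ((⋃ i, (Ts i).fvar) \ {x})
  | out n k ms Ts => n.vars ∪ (⋃ i, (ms i).vars ∪ (Ts i).fvar)
  | par S T => S.fvar ∪ T.fvar
  | res _ T => T.fvar
  | mat p q T => p.vars ∪ q.vars ∪ T.fvar
  | mis p q T => p.vars ∪ q.vars ∪ T.fvar
  | repInp n x T => n.vars ∪ (T.fvar \ {x})
  | repOut n m T => n.vars ∪ m.vars ∪ T.fvar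

/-- Global (non-local) names. -/
def gname : Term → Set Name
  | nil => ∅
  | inp n _ k Ts => n.names ∪ (⋃ i, (Ts i).gname)
  | out n k ms Ts => n.names ∪ (⋃ i, (ms i).names ∪ (Ts i).gname)
  | par S T => S.gname ∪ T.gname
  | res c T => T.gname \ {c}
  | mat p q T => p.names ∪ q.names ∪ T.gname
  | mis p q T => p.names ∪ q.names ∪ T.gname
  | repInp n _ T => n.names ∪ T.gname
  | repOut n m T => n.names ∪ m.names ∪ T.gname

end Term

/-- A π-process is a closed π-term. -/
def Closed (P : Term) : Prop := P.fvar = ∅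

def IsProc (P : Term) : Prop := Closed P

/-- Labels (external actions). -/
inductive Label : Type
  | inp : Name → Name → Label      -- ab
  | out : Name → Name → Label      -- āb
  | bout : Name → Name → Label     -- ā(c)
  deriving DecidableEq

def Label.names : Label → Set Name
  | .inp a b => {a, b}
  | .out a b => {a, b}
  | .bout a c => {a, c}

def Label.ren (α : Name → Name) : Label → Label
  | .inp a b => .inp (α a) (α b)
  | .out a b => .out (α a) (α b)
  | .bout a c => .bout (α a) (α c)

/-- Actions: internal action τ or a label. -/
inductive Act : Type
  | tau : Act
  | lab : Label → Act

def Act.names : Act → Set Name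
  | .tau => ∅
  | .lab ℓ => ℓ.names

def Act.ren (α : Name → Name) : Act → Act
  | .tau => .tau
  | .lab ℓ => .lab (ℓ.ren α)

/-- The labelled transition system of the π-calculus. -/
inductive Step : Term → Act → Term → Prop
  | inp {a : Name} {x : ℕ} {k : ℕ} {Ts : Fin k → Term} (i : Fin k) (c : Name) :
      Step (.inp (.nm a) x k Ts) (.lab (.inp a c)) ((Ts i).subst1 x c)
  | out {a : Name} {k : ℕ} {ms : Fin k → NV} {Ts : Fin k → Term} (i : Fin k) {c : Name}
      (h : ms i = .nm c) :
      Step (.out (.nm a) k ms Ts) (.lab (.out a c)) (Ts i)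
  | parR {S T T' : Term} {μ : Act} :
      Step T μ T' → Step (.par S T) μ (.par S T')
  | parL {S S' T : Term} {μ : Act} :
      Step S μ S' → Step (.par S T) μ (.par S' T)
  | commL {S S' T T' : Term} {a b : Name} :
      Step S (.lab (.inp a b)) S' → Step T (.lab (.out a b)) T' →
      Step (.par S T) .tau (.par S' T')
  | commR {S S' T T' : Term} {a b : Name} :
      Step S (.lab (.out a b)) S' → Step T (.lab (.inp a b)) T' →
      Step (.par S T) .tau (.par S' T')
  | closeL {S S' T T' : Term} {a c : Name} :
      Step S (.lab (.inp a c)) S' → Step T (.lab (.bout a c)) T' →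
      Step (.par S T) .tau (.res c (.par S' T'))
  | closeR {S S' T T' : Term} {a c : Name} :
      Step S (.lab (.bout a c)) S' → Step T (.lab (.inp a c)) T' →
      Step (.par S T) .tau (.res c (.par S' T'))
  | open_ {T T' : Term} {a c : Name} :
      Step T (.lab (.out a c)) T' → Step (.res c T) (.lab (.bout a c)) T'
  | resStep {T T' : Term} {μ : Act} {c : Name} :
      Step T μ T' → c ∉ μ.names → Step (.res c T) μ (.res c T')
  | matStep {T T' : Term} {μ : Act} {a : Name} :
      Step T μ T' → Step (.mat (.nm a) (.nm a) T) μ T'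
  | misStep {T T' : Term} {μ : Act} {a b : Name} :
      a ≠ b → Step T μ T' → Step (.mis (.nm a) (.nm b) T) μ T'
  | repOutStep {a b : Name} {T : Term} :
      Step (.repOut (.nm a) (.nm b) T) (.lab (.out a b)) (.par T (.repOut (.nm a) (.nm b) T))
  | repInpStep {a : Name} {x : ℕ} {T : Term} (b : Name) :
      Step (.repInp (.nm a) x T) (.lab (.inp a b)) (.par (T.subst1 x b) (.repInp (.nm a) x T))

/-- Internal action. -/
def Tau (P Q : Term) : Prop := Step P .tau Q

/-- `P ⟹ Q` : reflexive and transitive closure of τ. -/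
def WeakTau : Term → Term → Prop := Relation.ReflTransGen Tau

/-- `P ⇓` : observability. -/
def Obs (P : Term) : Prop := ∃ P' ℓ P'', WeakTau P P' ∧ Step P' (.lab ℓ) P''

abbrev PRel : Type := Term → Term → Prop

def OnProc (R : PRel) : Prop := ∀ P Q, R P Q → IsProc P ∧ IsProc Q

def ReflProc (R : PRel) : Prop := ∀ P, IsProc P → R P P

def Equipollent (R : PRel) : Prop := ∀ P Q, R P Q → (Obs P ↔ Obs Q)

def Extensional (R : PRel) : Prop :=
  (∀ L M P Q, R L M → R P Q → R (.par L P) (.par M Q)) ∧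
  (∀ P Q c, R P Q → R (.res c P) (.res c Q))

/-- An infinite τ-sequence. -/
def TauSeq (f : ℕ → Term) : Prop := ∀ n, Tau (f n) (f (n + 1))

/-- `P —τ→⟹ P'`. -/
def TauWeak (P P' : Term) : Prop := ∃ P₀, Tau P P₀ ∧ WeakTau P₀ P'

def Codivergent (R : PRel) : Prop := ∀ P Q, R P Q →
  ((∀ f : ℕ → Term, f 0 = Q → TauSeq f →
      ∃ k, 1 ≤ k ∧ ∃ P', TauWeak P P' ∧ R P' (f k)) ∧
   (∀ f : ℕ → Term, f 0 = P → TauSeq f →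
      ∃ k, 1 ≤ k ∧ ∃ Q', TauWeak Q Q' ∧ R Q' (f k)))

/-- Branching-style bisimulation. -/
def Bisim (R : PRel) : Prop := ∀ P Q, R P Q →
  ((∀ Q', Tau Q Q' →
      (∃ P', WeakTau P P' ∧ R P' Q ∧ R P' Q') ∨
      (∃ P'' P', WeakTau P P'' ∧ R P'' Q ∧ Tau P'' P' ∧ R P' Q')) ∧
   (∀ P', Tau P P' →
      (∃ Q', WeakTau Q Q' ∧ R P Q' ∧ R P' Q') ∨
      (∃ Q'' Q', WeakTau Q Q'' ∧ R P Q'' ∧ Tau Q'' Q' ∧ R P' Q')))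

/-- A relation qualifying for the absolute equality. -/
def GoodAbs (R : PRel) : Prop :=
  OnProc R ∧ ReflProc R ∧ Equipollent R ∧ Extensional R ∧ Codivergent R ∧ Bisim R

/-- The absolute equality: the largest reflexive, equipollent, extensional,
codivergent bisimulation on π-processes. -/
def AbsEq (P Q : Term) : Prop := ∃ R : PRel, GoodAbs R ∧ R P Q

/-- `P ⇊` : strong observability. -/
def StrongObs (P : Term) : Prop := ∀ P', WeakTau P P' → Obs P'

def StrongEquipollent (R : PRel) : Prop := ∀ P Q, R P Q → (StrongObs P ↔ StrongObs Q)

def GoodBox (R : PRel) : Prop := OnProc R ∧ ReflProc R ∧ StrongEquipollent R ∧ Extensional R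

/-- The box equality =_□ : the largest reflexive, strongly equipollent,
extensional relation on π-processes. -/
def BoxEq (P Q : Term) : Prop := ∃ R : PRel, GoodBox R ∧ R P Q

def GoodDia (R : PRel) : Prop := OnProc R ∧ ReflProc R ∧ Equipollent R ∧ Extensional R

/-- The diamond equality =_◇ : the largest reflexive, equipollent, extensional
relation on π-processes. -/
def DiamondEq (P Q : Term) : Prop := ∃ R : PRel, GoodDia R ∧ R P Q

/-! Absolute equality is a codivergent bisimulation, so strong observability is transported
along it. For `=_□ ⊆ =_◇`: if `P` can perform a label `ℓ` and `Q` is silent, hide all their names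
and put each beside a tester for `ℓ` and a flag `g(x)` on a fresh name. Beside `Q` the flag stays
available forever; beside `P`, the tester can react to `ℓ` and consume the flag, reaching a dead
process, so the two contexts differ in strong observability.

Both inclusions are strict. `0` and the silent divergent `(c)(c)(!c̄c | !c(x))` are related by the
context closure of the silent pairs, which is a symmetric weak simulation, but codivergence fails.
The internal choice `τ.āa + τ.0` and `āa` weakly simulate each other up to context, yet only the
former can reach a dead state. -/

namespace Term

def names : Term → Set Name
  | nil => ∅
  | inp n _ _ Ts => n.names ∪ ⋃ i, (Ts i).names
  | out n _ ms Ts => n.names ∪ ⋃ i, ((ms i).names ∪ (Ts i).names)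
  | par S T => S.names ∪ T.names
  | res c T => insert c T.names
  | mat p q T => p.names ∪ q.names ∪ T.names
  | mis p q T => p.names ∪ q.names ∪ T.names
  | repInp n _ T => n.names ∪ T.names
  | repOut n m T => n.names ∪ m.names ∪ T.names

lemma names_finite (T : Term) : T.names.Finite := by
  have hNV : ∀ n : NV, n.names.Finite := by rintro (_ | _) <;> simp [NV.names]
  induction T with
  | nil => exact Set.finite_empty
  | inp n _ _ _ ih => exact (hNV n).union (Set.finite_iUnion ih)
  | out n _ ms _ ih => exact (hNV n).union (Set.finite_iUnion fun i => (hNV (ms i)).union (ih i))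
  | par _ _ ihA ihB => exact ihA.union ihB
  | res c _ ih => exact ih.insert c
  | mat p q _ ih | mis p q _ ih | repOut p q _ ih => exact ((hNV p).union (hNV q)).union ih
  | repInp n _ _ ih => exact (hNV n).union ih

lemma names_applyVar (T : Term) {S : Set Name} {σ : ℕ → NV} (hσ : ∀ y, (σ y).names ⊆ S) :
    (T.applyVar σ).names ⊆ T.names ∪ S := by
  have hsub : ∀ {σ : ℕ → NV}, (∀ y, (σ y).names ⊆ S) → ∀ n : NV, (n.sub σ).names ⊆ n.names ∪ S
    | _, _, .nm _ => Set.subset_union_left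
    | _, hσ, .vr y => (hσ y).trans Set.subset_union_right
  have hupd : ∀ {σ : ℕ → NV} x, (∀ y, (σ y).names ⊆ S) →
      ∀ y, (Function.update σ x (NV.vr x) y).names ⊆ S := by
    intro σ x hσ y
    by_cases h : y = x
    · subst h; simp [NV.names]
    · rw [Function.update_of_ne h]; exact hσ y
  induction T generalizing σ with
  | nil => simp [applyVar, names]
  | inp n x k Ts ih =>
    have := hsub hσ n
    have := fun i => ih i (hupd x hσ)
    simp only [applyVar, names, Set.subset_def, Set.mem_union, Set.mem_iUnion] at *
    grind
  | out n k ms Ts ih =>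
    have := hsub hσ n
    have := fun i => hsub hσ (ms i)
    have := fun i => ih i hσ
    simp only [applyVar, names, Set.subset_def, Set.mem_union, Set.mem_iUnion] at *
    grind
  | par A B ihA ihB =>
    have := ihA hσ
    have := ihB hσ
    simp only [applyVar, names, Set.subset_def, Set.mem_union] at *
    grind
  | res c A ih =>
    have := ih hσ
    simp only [applyVar, names, Set.subset_def, Set.mem_union, Set.mem_insert_iff] at *
    grind
  | mat p q A ih | mis p q A ih | repOut p q A ih =>
    have := ih hσ
    have := hsub hσ p
    have := hsub hσ q
    simp only [applyVar, names, Set.subset_def, Set.mem_union] at *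
    grind
  | repInp n x A ih =>
    have := ih (hupd x hσ)
    have := hsub hσ n
    simp only [applyVar, names, Set.subset_def, Set.mem_union] at *
    grind

lemma names_subst1 (T : Term) (x : ℕ) (c : Name) : (T.subst1 x c).names ⊆ insert c T.names := by
  refine (T.names_applyVar (S := {c}) fun y => ?_).trans (by simp)
  split_ifs <;> simp [NV.names]

end Term

open Term

def Label.subj : Label → Name
  | .inp a _ | .out a _ | .bout a _ => a

/-- The names a process must already contain to perform the action: all of them, except the
object of an input. -/
def Act.knownNames : Act → Set Name
  | .tau => ∅
  | .lab (.inp a _) => {a}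
  | .lab (.out a b) => {a, b}
  | .lab (.bout a c) => {a, c}

lemma Label.subj_mem_knownNames (ℓ : Label) : ℓ.subj ∈ (Act.lab ℓ).knownNames := by
  cases ℓ <;> simp [Label.subj, Act.knownNames]

lemma Act.names_finite (μ : Act) : μ.names.Finite := by
  rcases μ with _ | (_ | _ | _) <;> simp [Act.names, Label.names]

lemma Label.subj_mem_names (ℓ : Label) : ℓ.subj ∈ (Act.lab ℓ).names := by
  cases ℓ <;> simp [Label.subj, Act.names, Label.names]

lemma Step.names_subset {T T' : Term} {μ : Act} (h : Step T μ T') :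
    T'.names ⊆ T.names ∪ μ.names ∧ μ.knownNames ⊆ T.names := by
  induction h
  case' inp x _ Ts i c => have := names_subst1 (Ts i) x c
  case' repInpStep x T b => have := names_subst1 T x b
  all_goals
    simp only [names, Act.names, Label.names, Act.knownNames, NV.names, Set.subset_def,
      Set.mem_union, Set.mem_iUnion, Set.mem_insert_iff, Set.mem_singleton_iff] at *
    grind

lemma Step.subj_mem_names {T T' : Term} {ℓ : Label} (h : Step T (.lab ℓ) T') :
    ℓ.subj ∈ T.names :=
  h.names_subset.2 ℓ.subj_mem_knownNames

lemma Tau.names_subset {T T' : Term} (h : Tau T T') : T'.names ⊆ T.names := by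
  simpa [Act.names] using Step.names_subset h |>.1

lemma WeakTau.names_subset {T T' : Term} (h : WeakTau T T') : T'.names ⊆ T.names := by
  induction h with
  | refl => exact subset_rfl
  | tail _ hstep ih => exact hstep.names_subset.trans ih

lemma weakTau_par {L L' P P' : Term} (hL : WeakTau L L') (hP : WeakTau P P') :
    WeakTau (.par L P) (.par L' P') :=
  (Relation.ReflTransGen.lift (fun X => par X P) (fun _ _ h => Step.parL h) _ _ hL).trans
    (Relation.ReflTransGen.lift (par L') (fun _ _ h => Step.parR h) _ _ hP)

lemma weakTau_res {T T' : Term} (c : Name) (h : WeakTau T T') :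
    WeakTau (.res c T) (.res c T') :=
  Relation.ReflTransGen.lift (res c) (fun _ _ h => Step.resStep h (by simp [Act.names])) _ _ h

lemma obs_of_step {P P' : Term} {ℓ : Label} (h : Step P (.lab ℓ) P') : Obs P :=
  ⟨P, ℓ, P', .refl, h⟩

lemma obs_of_weakTau {P P' : Term} (h : WeakTau P P') (h' : Obs P') : Obs P :=
  let ⟨X, ℓ, X', hw, hs⟩ := h'
  ⟨X, ℓ, X', h.trans hw, hs⟩

lemma Step.tau_of_not_obs {P P' : Term} {μ : Act} (hP : ¬ Obs P) (h : Step P μ P') :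
    μ = .tau ∧ ¬ Obs P' := by
  cases μ with
  | tau => exact ⟨rfl, fun h' => hP (obs_of_weakTau (.single h) h')⟩
  | lab ℓ => exact absurd (obs_of_step h) hP

/-- `(c)(c)M`: the outer restriction also blocks the extrusion `ā(c)` that the inner one
allows, so no action mentioning a hidden name escapes. -/
def hide : List Name → Term → Term
  | [], M => M
  | c :: l, M => .res c (.res c (hide l M))

lemma step_hide {M Y : Term} {μ : Act} (l : List Name) (h : Step M μ Y)
    (hl : ∀ c ∈ l, c ∉ μ.names) : Step (hide l M) μ (hide l Y) := by
  induction l with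
  | nil => exact h
  | cons c l ih =>
    have hc := hl c List.mem_cons_self
    exact .resStep (.resStep (ih fun c' hc' => hl c' (List.mem_cons_of_mem c hc')) hc) hc

lemma exists_of_step_hide {l : List Name} {M Y : Term} {μ : Act} (h : Step (hide l M) μ Y) :
    ∃ Y₀, Step M μ Y₀ ∧ Y = hide l Y₀ ∧ ∀ c ∈ l, c ∉ μ.names := by
  induction l generalizing Y with
  | nil => exact ⟨Y, h, rfl, by simp⟩
  | cons c l ih =>
    cases h with
    | open_ h => cases h with | resStep _ hc => simp [Act.names, Label.names] at hc
    | resStep h hc =>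
      cases h with
      | open_ _ => simp [Act.names, Label.names] at hc
      | resStep h hc' =>
        obtain ⟨Y₀, hM, rfl, hl⟩ := ih h
        exact ⟨Y₀, hM, rfl, List.forall_mem_cons.2 ⟨hc, hl⟩⟩

lemma weakTau_hide {M M' : Term} (l : List Name) (h : WeakTau M M') :
    WeakTau (hide l M) (hide l M') :=
  Relation.ReflTransGen.lift (hide l)
    (fun _ _ h => step_hide l h fun _ _ => by simp [Act.names]) _ _ h

lemma exists_of_weakTau_hide {l : List Name} {M X : Term} (h : WeakTau (hide l M) X) :
    ∃ M', X = hide l M' ∧ WeakTau M M' := by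
  induction h with
  | refl => exact ⟨M, rfl, .refl⟩
  | tail _ hstep ih =>
    obtain ⟨M', rfl, hw⟩ := ih
    obtain ⟨Y₀, hst, rfl, -⟩ := exists_of_step_hide hstep
    exact ⟨Y₀, rfl, hw.tail hst⟩

lemma not_obs_hide {l : List Name} {M : Term} (hM : M.names ⊆ {a | a ∈ l}) :
    ¬ Obs (hide l M) := by
  rintro ⟨X, ℓ, X', hw, hs⟩
  obtain ⟨M', rfl, hMM'⟩ := exists_of_weakTau_hide hw
  obtain ⟨_, hst, -, hl⟩ := exists_of_step_hide hs
  exact hl _ (hM (WeakTau.names_subset hMM' hst.subj_mem_names)) ℓ.subj_mem_names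

lemma not_obs_nil : ¬ Obs .nil :=
  not_obs_hide (l := []) (by simp [names])

lemma strongEquipollent_of_weakTau {R : PRel}
    (hR : ∀ {A B B'}, R A B → WeakTau B B' → ∃ A', WeakTau A A' ∧ R A' B')
    (hL : ∀ {A B A'}, R A B → WeakTau A A' → ∃ B', WeakTau B B' ∧ R A' B')
    (he : Equipollent R) : StrongEquipollent R := by
  refine fun A B h => ⟨fun hA B' hB => ?_, fun hB A' hA => ?_⟩
  · obtain ⟨A', hA', h'⟩ := hR h hB
    exact (he _ _ h').1 (hA A' hA')
  · obtain ⟨B', hB', h'⟩ := hL h hA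
    exact (he _ _ h').2 (hB B' hB')

lemma Bisim.flip {R : PRel} (h : Bisim R) : Bisim (flip R) :=
  fun P Q hR => ⟨(h Q P hR).2, (h Q P hR).1⟩

lemma Bisim.exists_weakTau {R : PRel} (hB : Bisim R) {P Q Q' : Term} (hR : R P Q)
    (hw : WeakTau Q Q') : ∃ P', WeakTau P P' ∧ R P' Q' := by
  induction hw with
  | refl => exact ⟨P, .refl, hR⟩
  | tail _ hstep ih =>
    obtain ⟨P', hP', hR'⟩ := ih
    rcases (hB _ _ hR').1 _ hstep with ⟨P'', h, -, hR''⟩ | ⟨P₁, P₂, h, -, hτ, hR''⟩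
    · exact ⟨P'', hP'.trans h, hR''⟩
    · exact ⟨P₂, hP'.trans (h.tail hτ), hR''⟩

theorem absEq_boxEq {P Q : Term} (h : AbsEq P Q) : BoxEq P Q := by
  obtain ⟨R, ⟨hOn, hRefl, hEq, hExt, -, hBis⟩, hR⟩ := h
  exact ⟨R, ⟨hOn, hRefl, strongEquipollent_of_weakTau hBis.exists_weakTau
    hBis.flip.exists_weakTau hEq, hExt⟩, hR⟩

section Testing

variable {l : List Name} {ℓ : Label} {g : Name} {X : Term}

def flag (g : Name) : Term := .inp (.nm g) 0 1 fun _ => .nil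

def gOut (g : Name) : Term := .out (.nm g) 1 (fun _ => .nm g) fun _ => .nil

def tester (ℓ : Label) (g : Name) : Term :=
  match ℓ with
  | .inp a b => .out (.nm a) 1 (fun _ => .nm b) fun _ => gOut g
  | .out a _ | .bout a _ => .inp (.nm a) 0 1 fun _ => gOut g

/-- The flag `g(x)` stays available until the tester, having reacted to `ℓ` from `X`,
consumes it. -/
def test (l : List Name) (ℓ : Label) (g : Name) (X : Term) : Term :=
  hide l (.par (.par X (tester ℓ g)) (flag g))

lemma step_flag {μ : Act} {Y : Term} (h : Step (flag g) μ Y) : ∃ m, μ = .lab (.inp g m) := by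
  cases h; exact ⟨_, rfl⟩

lemma step_tester {μ : Act} {Y : Term} (h : Step (tester ℓ g) μ Y) :
    ∃ ℓ', μ = .lab ℓ' ∧ ℓ'.subj = ℓ.subj := by
  cases ℓ <;> cases h <;> exact ⟨_, rfl, rfl⟩

lemma tau_tester_flag_of_not_obs (hX : ¬ Obs X) (hg : ℓ.subj ≠ g) {Y : Term}
    (h : Tau (.par (.par X (tester ℓ g)) (flag g)) Y) :
    ∃ X', Tau X X' ∧ Y = .par (.par X' (tester ℓ g)) (flag g) := by
  have hX' : ∀ {ℓ' X'}, ¬ Step X (.lab ℓ') X' := fun h => hX (obs_of_step h)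
  cases h with
  | parR h => obtain ⟨_, ⟨⟩⟩ := step_flag h
  | parL h =>
    cases h with
    | parL h => exact ⟨_, h, rfl⟩
    | parR h => obtain ⟨_, ⟨⟩, -⟩ := step_tester h
    | commL h | commR h | closeL h | closeR h => exact absurd h hX'
  | commL _ h | closeL _ h => obtain ⟨_, ⟨⟩⟩ := step_flag h
  | commR h hf | closeR h hf =>
    cases hf
    cases h with
    | parL h => exact absurd h hX'
    | parR h => obtain ⟨_, ⟨⟩, h⟩ := step_tester h; exact absurd h.symm hg

lemma strongObs_test (hX : ¬ Obs X) (hgl : g ∉ l) (hg : ℓ.subj ≠ g) :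
    StrongObs (test l ℓ g X) := by
  have inv : ∀ {Y}, WeakTau (test l ℓ g X) Y → ∃ X', Y = test l ℓ g X' ∧ ¬ Obs X' := by
    intro Y hw
    induction hw with
    | refl => exact ⟨X, rfl, hX⟩
    | tail _ hstep ih =>
      obtain ⟨X', rfl, hX'⟩ := ih
      obtain ⟨_, hst, rfl, -⟩ := exists_of_step_hide hstep
      obtain ⟨X'', hτ, rfl⟩ := tau_tester_flag_of_not_obs hX' hg hst
      exact ⟨X'', rfl, (hτ.tau_of_not_obs hX').2⟩
  intro Y hY
  obtain ⟨X', rfl, -⟩ := inv hY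
  refine obs_of_step (step_hide l (.parR (.inp (Ts := fun _ => .nil) 0 g)) ?_)
  rintro c hc (rfl | rfl) <;> exact hgl hc

lemma step_gOut : Step (gOut g) (.lab (.out g g)) .nil := .out 0 rfl

lemma tester_reacts {X' : Term} (hs : Step X (.lab ℓ) X') (hg : g ∉ (Act.lab ℓ).names) :
    ∃ Y Y', Tau (.par X (tester ℓ g)) Y ∧ Step Y (.lab (.out g g)) Y' ∧
      Y'.names ⊆ X'.names ∪ (Act.lab ℓ).names := by
  cases ℓ with
  | inp a b =>
    exact ⟨_, _, .commL hs (.out 0 rfl), .parR step_gOut, by simp [names]⟩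
  | out a b =>
    exact ⟨_, _, .commR hs (.inp (Ts := fun _ => gOut g) 0 b), .parR step_gOut,
      by simp [names]⟩
  | bout a b =>
    refine ⟨_, _, .closeR hs (.inp (Ts := fun _ => gOut g) 0 b),
      .resStep (.parR step_gOut) ?_, ?_⟩
    · simp_all [Act.names, Label.names, eq_comm]
    · simp [names, Act.names, Label.names]

lemma not_strongObs_test {X₁ X₂ : Term} (hw : WeakTau X X₁) (hs : Step X₁ (.lab ℓ) X₂)
    (hX : X.names ⊆ {a | a ∈ l}) (hℓ : (Act.lab ℓ).names ⊆ {a | a ∈ l}) (hgl : g ∉ l) :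
    ¬ StrongObs (test l ℓ g X) := by
  obtain ⟨Y, Y', hτ, hY, hY'⟩ := tester_reacts hs fun h => hgl (hℓ h)
  have hτ' : Tau (.par Y (flag g)) (.par Y' .nil) := .commR hY (.inp (Ts := fun _ => .nil) 0 g)
  have hw' : WeakTau (test l ℓ g X) (hide l (.par Y' .nil)) :=
    (weakTau_hide l (weakTau_par (weakTau_par hw .refl) .refl)).trans
      ((Relation.ReflTransGen.single (step_hide l (.parL hτ) (by simp [Act.names]))).tail
        (step_hide l hτ' (by simp [Act.names])))
  refine fun hSO => not_obs_hide ?_ (hSO _ hw')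
  have := (Step.names_subset hs).1
  have := WeakTau.names_subset hw
  simp only [names, Set.union_empty]
  grind

lemma obs_of_forall_strongObs_test_iff {X Y : Term}
    (h : ∀ l ℓ g, StrongObs (test l ℓ g X) ↔ StrongObs (test l ℓ g Y)) (hX : Obs X) : Obs Y := by
  by_contra hY
  obtain ⟨X₁, ℓ, X₂, hw, hs⟩ := hX
  have hfin := ((names_finite X).union (names_finite Y)).union (Act.lab ℓ).names_finite
  obtain ⟨g, hg⟩ := hfin.infinite_compl.nonempty
  set l := hfin.toFinset.toList
  have hl : ∀ a, a ∈ l ↔ a ∈ X.names ∪ Y.names ∪ (Act.lab ℓ).names := by simp [l]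
  have hgl : g ∉ l := fun h => hg ((hl g).1 h)
  refine not_strongObs_test hw hs (fun a ha => (hl a).2 (.inl (.inl ha)))
    (fun a ha => (hl a).2 (.inr ha)) hgl ((h l ℓ g).2 (strongObs_test hY hgl ?_))
  exact fun h => hg (.inr (h ▸ ℓ.subj_mem_names))

end Testing

lemma Extensional.hide {R : PRel} (hR : Extensional R) (l : List Name) {M N : Term}
    (h : R M N) : R (hide l M) (hide l N) := by
  induction l with
  | nil => exact h
  | cons c l ih => exact hR.2 _ _ c (hR.2 _ _ c ih)

theorem boxEq_diamondEq {P Q : Term} (h : BoxEq P Q) : DiamondEq P Q := by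
  obtain ⟨R, ⟨hOn, hRefl, hSE, hExt⟩, hR⟩ := h
  refine ⟨R, ⟨hOn, hRefl, fun A B hAB => ?_, hExt⟩, hR⟩
  have htest : ∀ l ℓ g, StrongObs (test l ℓ g A) ↔ StrongObs (test l ℓ g B) := by
    intro l ℓ g
    have hproc : IsProc (tester ℓ g) ∧ IsProc (flag g) := by
      cases ℓ <;> simp [IsProc, Closed, tester, flag, gOut, fvar, NV.vars]
    exact hSE _ _ (hExt.hide l (hExt.1 _ _ _ _ (hExt.1 _ _ _ _ hAB (hRefl _ hproc.1))
      (hRefl _ hproc.2)))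
  exact ⟨obs_of_forall_strongObs_test_iff htest,
    obs_of_forall_strongObs_test_iff fun l ℓ g => (htest l ℓ g).symm⟩

def WeakStep (A : Term) : Act → Term → Prop
  | .tau, A' => WeakTau A A'
  | .lab ℓ, A' => ∃ A₁, WeakTau A A₁ ∧ Step A₁ (.lab ℓ) A'

lemma weakStep_of_step {A A' : Term} {μ : Act} (h : Step A μ A') : WeakStep A μ A' := by
  cases μ with
  | tau => exact .single h
  | lab ℓ => exact ⟨A, .refl, h⟩

lemma WeakStep.parL {S S' : Term} (T : Term) {μ : Act} (h : WeakStep S μ S') :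
    WeakStep (.par S T) μ (.par S' T) := by
  cases μ with
  | tau => exact weakTau_par h .refl
  | lab ℓ =>
    obtain ⟨S₁, hw, hs⟩ := h
    exact ⟨.par S₁ T, weakTau_par hw .refl, .parL hs⟩

lemma WeakStep.parR {T T' : Term} (S : Term) {μ : Act} (h : WeakStep T μ T') :
    WeakStep (.par S T) μ (.par S T') := by
  cases μ with
  | tau => exact weakTau_par .refl h
  | lab ℓ =>
    obtain ⟨T₁, hw, hs⟩ := h
    exact ⟨.par S T₁, weakTau_par .refl hw, .parR hs⟩

lemma WeakStep.res {T T' : Term} (c : Name) {μ : Act} (hc : c ∉ μ.names)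
    (h : WeakStep T μ T') : WeakStep (.res c T) μ (.res c T') := by
  cases μ with
  | tau => exact weakTau_res c h
  | lab ℓ =>
    obtain ⟨T₁, hw, hs⟩ := h
    exact ⟨.res c T₁, weakTau_res c hw, .resStep hs hc⟩

def IsWeakSim (S : PRel) : Prop :=
  ∀ ⦃A B A' : Term⦄ ⦃μ : Act⦄, S A B → Step A μ A' → ∃ B', WeakStep B μ B' ∧ S A' B'

lemma IsWeakSim.exists_weakTau {S : PRel} (hS : IsWeakSim S) {A B A' : Term} (h : S A B)
    (hw : WeakTau A A') : ∃ B', WeakTau B B' ∧ S A' B' := by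
  induction hw with
  | refl => exact ⟨B, .refl, h⟩
  | tail _ hstep ih =>
    obtain ⟨B', hB', h'⟩ := ih
    obtain ⟨B'', hB'', h''⟩ := hS h' hstep
    exact ⟨B'', hB'.trans hB'', h''⟩

lemma IsWeakSim.obs {S : PRel} (hS : IsWeakSim S) {A B : Term} (h : S A B) (hA : Obs A) :
    Obs B := by
  obtain ⟨A₁, ℓ, A₂, hw, hs⟩ := hA
  obtain ⟨B₁, hB₁, h₁⟩ := hS.exists_weakTau h hw
  obtain ⟨B₂, ⟨B₁', hw', hs'⟩, -⟩ := hS h₁ hs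
  exact ⟨B₁', ℓ, B₂, hB₁.trans hw', hs'⟩

lemma IsWeakSim.strongEquipollent {S : PRel} (hS : IsWeakSim S)
    (hsymm : ∀ {A B}, S A B → S B A) : StrongEquipollent S :=
  strongEquipollent_of_weakTau
    (fun h hw => let ⟨A', hA', h'⟩ := hS.exists_weakTau (hsymm h) hw; ⟨A', hA', hsymm h'⟩)
    hS.exists_weakTau fun _ _ h => ⟨hS.obs h, hS.obs (hsymm h)⟩

inductive CtxClosure (S : PRel) : PRel
  | refl (A : Term) : CtxClosure S A A
  | base {A B : Term} : S A B → CtxClosure S A B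
  | par {L M P Q : Term} : CtxClosure S L M → CtxClosure S P Q →
      CtxClosure S (.par L P) (.par M Q)
  | res {P Q : Term} (c : Name) : CtxClosure S P Q → CtxClosure S (.res c P) (.res c Q)

namespace CtxClosure

variable {S : PRel}

lemma extensional : Extensional (CtxClosure S) :=
  ⟨fun _ _ _ _ => par, fun _ _ => res⟩

lemma symm (hS : ∀ {A B}, S A B → S B A) {A B : Term} (h : CtxClosure S A B) :
    CtxClosure S B A := by
  induction h with
  | refl A => exact refl A
  | base h => exact base (hS h)
  | par _ _ ihL ihP => exact par ihL ihP
  | res c _ ih => exact res c ih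

lemma isWeakSim
    (hS : ∀ {A B A' : Term} {μ : Act}, S A B → Step A μ A' →
      ∃ B', WeakStep B μ B' ∧ CtxClosure S A' B') : IsWeakSim (CtxClosure S) := by
  intro A B A' μ h hs
  induction h generalizing A' μ with
  | refl A => exact ⟨A', weakStep_of_step hs, refl A'⟩
  | base h => exact hS h hs
  | @par L M P Q _ _ ihL ihP =>
    cases hs with
    | parL h =>
      obtain ⟨M', hM', h'⟩ := ihL h
      exact ⟨_, hM'.parL Q, par h' ‹_›⟩
    | parR h =>
      obtain ⟨Q', hQ', h'⟩ := ihP h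
      exact ⟨_, hQ'.parR M, par ‹_› h'⟩
    | commL hL hP | commR hL hP =>
      obtain ⟨M', ⟨M₁, hwM, hsM⟩, hL'⟩ := ihL hL
      obtain ⟨Q', ⟨Q₁, hwQ, hsQ⟩, hP'⟩ := ihP hP
      first
      | exact ⟨_, (weakTau_par hwM hwQ).tail (.commL hsM hsQ), par hL' hP'⟩
      | exact ⟨_, (weakTau_par hwM hwQ).tail (.commR hsM hsQ), par hL' hP'⟩
    | closeL hL hP | closeR hL hP =>
      obtain ⟨M', ⟨M₁, hwM, hsM⟩, hL'⟩ := ihL hL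
      obtain ⟨Q', ⟨Q₁, hwQ, hsQ⟩, hP'⟩ := ihP hP
      first
      | exact ⟨_, (weakTau_par hwM hwQ).tail (.closeL hsM hsQ), res _ (par hL' hP')⟩
      | exact ⟨_, (weakTau_par hwM hwQ).tail (.closeR hsM hsQ), res _ (par hL' hP')⟩
  | res c _ ih =>
    cases hs with
    | open_ h =>
      obtain ⟨Q', ⟨Q₁, hw, hs⟩, h'⟩ := ih h
      exact ⟨Q', ⟨.res c Q₁, weakTau_res c hw, .open_ hs⟩, h'⟩
    | resStep h hc =>
      obtain ⟨Q', hQ', h'⟩ := ih h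
      exact ⟨_, hQ'.res c hc, res c h'⟩

end CtxClosure

def OnProcs (R : PRel) : PRel := fun A B => IsProc A ∧ IsProc B ∧ R A B

lemma isProc_par {A B : Term} (hA : IsProc A) (hB : IsProc B) : IsProc (.par A B) := by
  simp_all [IsProc, Closed, fvar]

lemma OnProcs.extensional {R : PRel} (h : Extensional R) : Extensional (OnProcs R) :=
  ⟨fun _ _ _ _ hLM hPQ =>
      ⟨isProc_par hLM.1 hPQ.1, isProc_par hLM.2.1 hPQ.2.1, h.1 _ _ _ _ hLM.2.2 hPQ.2.2⟩,
    fun _ _ c hPQ => ⟨hPQ.1, hPQ.2.1, h.2 _ _ c hPQ.2.2⟩⟩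

lemma goodBox_onProcs {R : PRel} (hrefl : ∀ P, R P P) (hSE : StrongEquipollent R)
    (hext : Extensional R) : GoodBox (OnProcs R) :=
  ⟨fun _ _ h => ⟨h.1, h.2.1⟩, fun P hP => ⟨hP, hP, hrefl P⟩, fun _ _ h => hSE _ _ h.2.2,
    OnProcs.extensional hext⟩

lemma goodDia_onProcs {R : PRel} (hrefl : ∀ P, R P P) (hE : Equipollent R)
    (hext : Extensional R) : GoodDia (OnProcs R) :=
  ⟨fun _ _ h => ⟨h.1, h.2.1⟩, fun P hP => ⟨hP, hP, hrefl P⟩, fun _ _ h => hE _ _ h.2.2,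
    OnProcs.extensional hext⟩

def padNil (T : Term) : ℕ → Term
  | 0 => T
  | n + 1 => .par .nil (padNil T n)

lemma step_padNil {T : Term} {μ : Act} (h : Step T μ (.par .nil T)) (n : ℕ) :
    Step (padNil T n) μ (padNil T (n + 1)) := by
  induction n with
  | zero => exact h
  | succ n ih => exact .parR ih

/-- `divergent 0` is `(c)(c)(!c̄c.0 | !c(x).0)` with `c = 1`, and `divergent n` its `n`-th
τ-descendant: each communication leaves a `0` on both sides. -/
def divergent (n : ℕ) : Term :=
  hide [1] (.par (padNil (.repOut (.nm 1) (.nm 1) .nil) n) (padNil (.repInp (.nm 1) 0 .nil) n))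

lemma tauSeq_divergent : TauSeq divergent := fun n =>
  step_hide [1] (.commR (step_padNil .repOutStep n) (step_padNil (.repInpStep 1) n))
    (by simp [Act.names])

lemma not_obs_divergent : ¬ Obs (divergent 0) :=
  not_obs_hide (by simp [padNil, names, NV.names])

theorem boxEq_nil_divergent : BoxEq .nil (divergent 0) := by
  let Silent : PRel := fun A B => ¬ Obs A ∧ ¬ Obs B
  have hsim : IsWeakSim (CtxClosure Silent) := CtxClosure.isWeakSim fun ⟨hA, hB⟩ hs => by
    obtain ⟨rfl, hA'⟩ := hs.tau_of_not_obs hA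
    exact ⟨_, .refl, .base ⟨hA', hB⟩⟩
  refine ⟨_, goodBox_onProcs .refl (hsim.strongEquipollent (CtxClosure.symm And.symm))
    CtxClosure.extensional, ?_, ?_, .base ⟨not_obs_nil, not_obs_divergent⟩⟩ <;>
  simp [IsProc, Closed, divergent, hide, padNil, fvar, NV.vars]

theorem not_absEq_nil_divergent : ¬ AbsEq .nil (divergent 0) := by
  rintro ⟨R, ⟨-, -, -, -, hCo, -⟩, hR⟩
  obtain ⟨-, -, -, ⟨_, hτ, -⟩, -⟩ := (hCo _ _ hR).1 divergent rfl tauSeq_divergent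
  cases hτ

def ping : Term := .out (.nm 0) 1 (fun _ => .nm 0) fun _ => .nil

/-- The internal choice `τ.ping + τ.0`, each `τ` being a communication on the hidden name `1`. -/
def choice : Term :=
  hide [1] (.par (.out (.nm 1) 1 (fun _ => .nm 1) fun _ => .nil) (.inp (.nm 1) 0 2 ![ping, .nil]))

def chosen : Term := hide [1] (.par .nil ping)

def spent : Term := hide [1] (.par .nil .nil)

lemma not_obs_spent : ¬ Obs spent := not_obs_hide (by simp [names])

lemma step_chosen_spent : Step chosen (.lab (.out 0 0)) spent :=
  step_hide [1] (.parR (.out 0 rfl)) (by simp [Act.names, Label.names])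

lemma tau_choice_chosen : Tau choice chosen :=
  step_hide [1] (.commR (.out 0 rfl) (.inp (Ts := ![ping, .nil]) 0 1)) (by simp [Act.names])

lemma tau_choice_spent : Tau choice spent :=
  step_hide [1] (.commR (.out 0 rfl) (.inp (Ts := ![ping, .nil]) 1 1)) (by simp [Act.names])

lemma step_chosen {μ : Act} {Y : Term} (h : Step chosen μ Y) :
    μ = .lab (.out 0 0) ∧ Y = spent := by
  obtain ⟨_, hM, rfl, -⟩ := exists_of_step_hide h
  cases hM with
  | parR hs => cases hs with | out _ hc => cases hc; exact ⟨rfl, rfl⟩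
  | parL hs | commL hs | commR hs | closeL hs | closeR hs => cases hs

lemma step_choice {μ : Act} {Y : Term} (h : Step choice μ Y) :
    μ = .tau ∧ (Y = chosen ∨ Y = spent) := by
  obtain ⟨_, hM, rfl, hl⟩ := exists_of_step_hide h
  have h1 : (1 : Name) ∉ μ.names := hl 1 List.mem_cons_self
  cases hM with
  | parL hs => cases hs with | out _ hc => cases hc; simp [Act.names, Label.names] at h1
  | parR hs => cases hs; simp [Act.names, Label.names] at h1
  | commR hC hI =>
    cases hC with
    | out _ hc =>
      cases hc
      cases hI with
      | inp i c =>
        refine ⟨rfl, ?_⟩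
        fin_cases i <;> simp [chosen, spent, ping, subst1, applyVar, NV.sub]
  | commL hs _ | closeL hs _ | closeR hs _ => cases hs

inductive ChoiceSim : PRel
  | silent {A : Term} (B : Term) : ¬ Obs A → ChoiceSim A B
  | choice_chosen : ChoiceSim choice chosen
  | chosen_choice : ChoiceSim chosen choice

lemma isWeakSim_choiceSim : IsWeakSim (CtxClosure ChoiceSim) := by
  refine CtxClosure.isWeakSim fun h hs => ?_
  cases h with
  | silent _ hA =>
    obtain ⟨rfl, hA'⟩ := hs.tau_of_not_obs hA
    exact ⟨_, .refl, .base (.silent _ hA')⟩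
  | choice_chosen =>
    obtain ⟨rfl, rfl | rfl⟩ := step_choice hs
    · exact ⟨chosen, .refl, .refl chosen⟩
    · exact ⟨chosen, .refl, .base (.silent chosen not_obs_spent)⟩
  | chosen_choice =>
    obtain ⟨rfl, rfl⟩ := step_chosen hs
    exact ⟨spent, ⟨chosen, .single tau_choice_chosen, step_chosen_spent⟩, .refl spent⟩

theorem diamondEq_choice_chosen : DiamondEq choice chosen := by
  have hsim := isWeakSim_choiceSim
  let Mutual : PRel := fun A B => CtxClosure ChoiceSim A B ∧ CtxClosure ChoiceSim B A
  refine ⟨OnProcs Mutual, goodDia_onProcs (fun P => ⟨.refl P, .refl P⟩)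
    (fun _ _ h => ⟨hsim.obs h.1, hsim.obs h.2⟩)
    ⟨fun _ _ _ _ h h' => ⟨.par h.1 h'.1, .par h.2 h'.2⟩,
      fun _ _ c h => ⟨.res c h.1, .res c h.2⟩⟩,
    ?_, ?_, .base .choice_chosen, .base .chosen_choice⟩
  all_goals
    simp [IsProc, Closed, choice, chosen, hide, ping, fvar, NV.vars, Fin.forall_fin_two]

theorem not_boxEq_choice_chosen : ¬ BoxEq choice chosen := by
  rintro ⟨R, ⟨-, -, hSE, -⟩, hR⟩
  have hchosen : StrongObs chosen := fun Y hY => by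
    rcases Relation.ReflTransGen.cases_head hY with rfl | ⟨_, hτ, -⟩
    · exact obs_of_step step_chosen_spent
    · exact absurd (step_chosen hτ).1 nofun
  exact not_obs_spent ((hSE _ _ hR).2 hchosen spent (.single tau_choice_spent))

/-- the inclusions = ⊆ =_□ ⊆ =_◇ hold and both are strict. -/
theorem abs_box_diamond_strict_inclusions :
    (∀ P Q : Term, AbsEq P Q → BoxEq P Q) ∧
    (∀ P Q : Term, BoxEq P Q → DiamondEq P Q) ∧
    (∃ P Q : Term, BoxEq P Q ∧ ¬ AbsEq P Q) ∧
    (∃ P Q : Term, DiamondEq P Q ∧ ¬ BoxEq P Q) :=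
  ⟨fun _ _ => absEq_boxEq, fun _ _ => boxEq_diamondEq,
    ⟨.nil, divergent 0, boxEq_nil_divergent, not_absEq_nil_divergent⟩,
    ⟨choice, chosen, diamondEq_choice_chosen, not_boxEq_choice_chosen⟩⟩
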